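/- arXiv:quant-ph/0504136 — 6 statements merged into one kernel-verified Lean document; each statement's English description precedes it below -/
import Mathlib

section
/- For any pair of functions f, g : Bool → Bool, the number of input pairs (x, y) ∈ Bool × Bool such that f(x) XOR g(y) = x AND y is at most 3. Moreover, there exist f, g achieving exactly 3. -/
theorem chsh_classical_value :
    (∀ f g : Bool → Bool,
      (Finset.univ.filter
        (fun p : Bool × Bool => Bool.xor (f p.1) (g p.2) = (p.1 && p.2))).card ≤ 3) ∧
    (∃ f g : Bool → Bool,
      (Finset.univ.filter
        (fun p : Bool × Bool => Bool.xor (f p.1) (g p.2) = (p.1 && p.2))).card = 3) := by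
  constructor
  · intro f g
    have hf : f = fun x => bif x then f true else f false := by funext x; cases x <;> rfl
    have hg : g = fun x => bif x then g true else g false := by funext x; cases x <;> rfl
    rw [hf, hg]
    rcases Bool.dichotomy (f true) with h1 | h1 <;>
    rcases Bool.dichotomy (f false) with h2 | h2 <;>
    rcases Bool.dichotomy (g true) with h3 | h3 <;>
    rcases Bool.dichotomy (g false) with h4 | h4 <;>
    rw [h1, h2, h3, h4] <;> decide
  · exact ⟨fun _ => false, fun _ => false, by decide⟩
end

section
/- There are no functions f, g, h : Bool → Bool such that for all bits a, b, c with a + b + c even (as natural numbers), f(a) XOR g(b) XOR h(c) equals the parity bit ((a + b + c) / 2) mod 2. (No deterministic local strategy wins the Mermin–GHZ game.) -/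
theorem no_deterministic_ghz_winning_strategy :
    ¬ ∃ f g h : Bool → Bool, ∀ a b c : Bool,
      (a.toNat + b.toNat + c.toNat) % 2 = 0 →
      Bool.xor (Bool.xor (f a) (g b)) (h c) =
        decide ((a.toNat + b.toNat + c.toNat) / 2 % 2 = 1) := by
  rintro ⟨f, g, h, H⟩
  have h1 := H false false false (by decide)
  have h2 := H false true true (by decide)
  have h3 := H true false true (by decide)
  have h4 := H true true false (by decide)
  simp at h1 h2 h3 h4
  revert h1 h2 h3 h4
  cases f false <;> cases f true <;> cases g false <;> cases g true <;>
    cases h false <;> cases h true <;> decide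
end

section
/- For all bits a, b, c with a + b + c even, the negation of (a OR b) equals ((a + b + c)/2 + 1) mod 2. Consequently, if y_A XOR y_B = NOT(a OR b) (as produced by a non-local box on inputs NOT a and NOT b) and y_C = 1, then y_A XOR y_B XOR y_C = (a+b+c)/2 mod 2, so one non-local box wins the Mermin–GHZ game. -/
theorem nlb_wins_ghz :
    ∀ a b c : Bool, (a.toNat + b.toNat + c.toNat) % 2 = 0 →
      (!(a || b)) = decide (((a.toNat + b.toNat + c.toNat) / 2 + 1) % 2 = 1) ∧
      (∀ yA yB yC : Bool,
        Bool.xor yA yB = !(a || b) → yC = true →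
        Bool.xor (Bool.xor yA yB) yC =
          decide ((a.toNat + b.toNat + c.toNat) / 2 % 2 = 1)) := by
  decide
end

section
/- For any n ≥ 3 and any x : Fin n → Bool with Hamming weight w = Σ x_i even, the sum over all unordered pairs {i,j} of (x_i AND x_j), taken mod 2, equals (w/2) mod 2. Hence the strategy where each pair of players shares a non-local box fed with their inputs, and each player outputs the XOR of all his box outputs, wins the multi-party Mermin–GHZ game. -/
theorem pairwise_nlb_wins_multiparty_ghz (n : ℕ) (hn : 3 ≤ n)
    (x : Fin n → Bool) (h : (∑ i, (x i).toNat) % 2 = 0) :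
    (∑ p ∈ Finset.univ.filter (fun p : Fin n × Fin n => p.1 < p.2),
        (x p.1 && x p.2).toNat) % 2
      = ((∑ i, (x i).toNat) / 2) % 2 := by
  classical
  set w := ∑ i, (x i).toNat with hw
  set S := ∑ p ∈ Finset.univ.filter (fun p : Fin n × Fin n => p.1 < p.2),
      (x p.1 && x p.2).toNat with hS
  have hf : ∀ p : Fin n × Fin n, (x p.1 && x p.2).toNat
      = (x p.1).toNat * (x p.2).toNat := by
    intro p; cases x p.1 <;> cases x p.2 <;> simp
  have hT : ∑ p : Fin n × Fin n, (x p.1 && x p.2).toNat = w * w := by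
    simp only [hf]
    rw [← Finset.univ_product_univ, Finset.sum_product, hw, Finset.sum_mul_sum]
  -- split the full sum into lt, eq, gt parts
  have hsplit : ∑ p : Fin n × Fin n, (x p.1 && x p.2).toNat
      = S + (∑ p ∈ Finset.univ.filter (fun p : Fin n × Fin n => ¬ p.1 < p.2),
          (x p.1 && x p.2).toNat) := by
    rw [hS, Finset.sum_filter_add_sum_filter_not]
  have hsplit2 : (∑ p ∈ Finset.univ.filter (fun p : Fin n × Fin n => ¬ p.1 < p.2),
          (x p.1 && x p.2).toNat)
      = (∑ p ∈ Finset.univ.filter (fun p : Fin n × Fin n => p.2 < p.1),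
          (x p.1 && x p.2).toNat)
        + (∑ p ∈ Finset.univ.filter (fun p : Fin n × Fin n => p.1 = p.2),
          (x p.1 && x p.2).toNat) := by
    rw [← Finset.sum_filter_add_sum_filter_not
      (Finset.univ.filter (fun p : Fin n × Fin n => ¬ p.1 < p.2))
      (fun p : Fin n × Fin n => p.2 < p.1)]
    congr 1
    · congr 1; ext p; simp only [Finset.mem_filter, Finset.mem_univ, true_and]
      constructor
      · rintro ⟨h1, h2⟩; exact h2
      · intro h2; exact ⟨fun hl => absurd (hl.trans h2) (lt_irrefl _), h2⟩
    · congr 1; ext p; simp only [Finset.mem_filter, Finset.mem_univ, true_and]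
      omega
  have hgt : (∑ p ∈ Finset.univ.filter (fun p : Fin n × Fin n => p.2 < p.1),
          (x p.1 && x p.2).toNat) = S := by
    rw [hS]
    apply Finset.sum_nbij' (fun p => Prod.swap p) (fun p => Prod.swap p)
    · intro p hp; simp only [Finset.mem_filter, Finset.mem_univ, true_and] at hp ⊢
      exact hp
    · intro p hp; simp only [Finset.mem_filter, Finset.mem_univ, true_and] at hp ⊢
      exact hp
    · intro p _; simp
    · intro p _; simp
    · intro p _; simp [Bool.and_comm]
  have hdiag : (∑ p ∈ Finset.univ.filter (fun p : Fin n × Fin n => p.1 = p.2),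
          (x p.1 && x p.2).toNat) = w := by
    rw [hw]
    apply Finset.sum_nbij' (fun p => p.1) (fun i => (i, i))
    · intro p hp; simp
    · intro p hp; simp
    · intro p hp; simp only [Finset.mem_filter, Finset.mem_univ, true_and] at hp
      exact Prod.ext rfl hp
    · intro i _; rfl
    · intro p hp; simp only [Finset.mem_filter, Finset.mem_univ, true_and] at hp
      rw [← hp]; cases x p.1 <;> simp
  have key : 2 * S + w = w * w := by
    rw [← hT, hsplit, hsplit2, hgt, hdiag]; ring
  obtain ⟨k, hk⟩ : ∃ k, w = 2 * k := ⟨w / 2, by omega⟩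
  have h4 : 2 * S + 2 * k = 4 * (k * k) := by rw [hk] at key; linarith [key]
  have : w / 2 = k := by omega
  rw [this]
  omega
end

section
/- There exist functions A0, A1, B0, B1 : Fin 3 → Fin 3 → ZMod 2 such that: (i) every row of A0 and A1 has even sum: for all r, A_i r 0 + A_i r 1 + A_i r 2 = 0; (ii) every column strategy of B0 and B1 has odd sum: for all c, B_j c 0 + B_j c 1 + B_j c 2 = 1; (iii) for all rows r and columns c with (r,c) ≠ (2,2) (0-indexed), A0 r c = B0 c r and A1 r c = B1 c r; and (iv) A0 2 2 = B1 2 2 and A1 2 2 = B0 2 2. (Such strategies yield a winning strategy for the magic square game using a single non-local box.) -/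
theorem magic_square_nlb_strategies_exist :
    ∃ A0 A1 B0 B1 : Fin 3 → Fin 3 → ZMod 2,
      (∀ r : Fin 3, A0 r 0 + A0 r 1 + A0 r 2 = 0) ∧
      (∀ r : Fin 3, A1 r 0 + A1 r 1 + A1 r 2 = 0) ∧
      (∀ c : Fin 3, B0 c 0 + B0 c 1 + B0 c 2 = 1) ∧
      (∀ c : Fin 3, B1 c 0 + B1 c 1 + B1 c 2 = 1) ∧
      (∀ r c : Fin 3, (r, c) ≠ (2, 2) → A0 r c = B0 c r ∧ A1 r c = B1 c r) ∧
      A0 2 2 = B1 2 2 ∧ A1 2 2 = B0 2 2 := by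
  refine ⟨![![1,1,0], ![0,0,0], ![0,0,0]],
    ![![0,1,1], ![0,0,0], ![1,0,1]],
    ![![1,0,0], ![1,0,0], ![0,0,1]],
    ![![0,0,1], ![1,0,0], ![1,0,0]], ?_, ?_, ?_, ?_, ?_, ?_, ?_⟩ <;> decide
end

section
/- For every pair of deterministic strategies A : Fin 3 → Fin 3 → ZMod 2 (rows with even parity) and B : Fin 3 → Fin 3 → ZMod 2 (columns with odd parity), there exists an input (r, c) ∈ Fin 3 × Fin 3 with A r c ≠ B c r. (No classical deterministic strategy wins the magic square game on all inputs.) -/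
theorem no_classical_magic_square_strategy
    (A B : Fin 3 → Fin 3 → ZMod 2)
    (hA : ∀ r : Fin 3, A r 0 + A r 1 + A r 2 = 0)
    (hB : ∀ c : Fin 3, B c 0 + B c 1 + B c 2 = 1) :
    ∃ r c : Fin 3, A r c ≠ B c r := by
  by_contra h
  push_neg at h
  have h2 : (2 : ZMod 2) = 0 := by decide
  have : (0 : ZMod 2) = 1 := by
    linear_combination (hA 0 + hA 1 + hA 2) - (hB 0 + hB 1 + hB 2)
      - (h 0 0 + h 0 1 + h 0 2 + h 1 0 + h 1 1 + h 1 2 + h 2 0 + h 2 1 + h 2 2) - 2 * h2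
  exact absurd this (by decide)
end
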